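/- Let q be a real number with q > 0 and q ≠ 1, let k ≥ 1 and x ≥ 1 be natural numbers, and let r_1, …, r_k ≥ 1 be natural numbers with s_k = r_1 + ⋯ + r_k. Then the q-factorial of order s_k satisfies [x]_{s_k, q} = q^{s_k} · [x−1]_{s_k, q} + Σ_{j=1}^{k} q^{s_{j−1}} · [r_j]_q · [x−1]_{s_k − 1, q}, where s_j = r_1 + ⋯ + r_j and s_0 = 0. -/

import Mathlib

noncomputable def qNum (q : ℝ) (m : ℤ) : ℝ := (1 - q ^ m) / (1 - q)

noncomputable def qFactorial (q : ℝ) (n : ℕ) : ℝ :=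
  ∏ i ∈ Finset.range n, qNum q ((i : ℤ) + 1)

noncomputable def qFacOrd (q : ℝ) (x : ℤ) (r : ℕ) : ℝ :=
  ∏ i ∈ Finset.range r, qNum q (x - (i : ℤ))

noncomputable def qMultinomial (q : ℝ) (x : ℤ) {k : ℕ} (r : Fin k → ℕ) : ℝ :=
  qFacOrd q x (∑ j, r j) / ∏ j, qFactorial q (r j)

/-!
Peeling off the top factor, `[x]_{s,q} = [x]_q [x-1]_{s-1,q}` and
`[x-1]_{s,q} = [x-1]_{s-1,q} [x-s]_q`, so the recursion reduces to the scalar identity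
`[x]_q = q^s [x-s]_q + [s]_q`. The sum over `j` collapses to `[s_k]_q` by telescoping
`[a + b]_q = [a]_q + q^a [b]_q`.
-/

open Finset

section QNum

variable (q : ℝ)

@[simp]
lemma qNum_zero : qNum q 0 = 0 := by
  simp [qNum]

lemma qNum_add {q : ℝ} (hq : q ≠ 0) (m n : ℤ) :
    qNum q (m + n) = qNum q m + q ^ m * qNum q n := by
  simp only [qNum, zpow_add₀ hq]
  ring

lemma qNum_natCast_add (a b : ℕ) :
    qNum q ((a + b : ℕ) : ℤ) = qNum q a + q ^ a * qNum q b := by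
  simp only [qNum, zpow_natCast, pow_add]
  ring

lemma sum_pow_mul_qNum {α : Type*} [LinearOrder α] (s : Finset α) (r : α → ℕ) :
    ∑ j ∈ s, q ^ (∑ i ∈ s with i < j, r i) * qNum q (r j) = qNum q ((∑ i ∈ s, r i : ℕ) : ℤ) := by
  classical
  induction s using Finset.induction_on_max with
  | empty => simp
  | insert a s ha ih =>
    have ha' : a ∉ s := fun h => lt_irrefl a (ha a h)
    have below_a : ∑ i ∈ insert a s with i < a, r i = ∑ i ∈ s, r i := by
      rw [filter_insert, if_neg (lt_irrefl a), filter_true_of_mem ha]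
    have below_j : ∑ j ∈ s, q ^ (∑ i ∈ insert a s with i < j, r i) * qNum q (r j)
        = ∑ j ∈ s, q ^ (∑ i ∈ s with i < j, r i) * qNum q (r j) :=
      sum_congr rfl fun j hj => by rw [filter_insert, if_neg (ha j hj).not_gt]
    rw [sum_insert ha', sum_insert ha', below_a, below_j, ih, add_comm (r a), qNum_natCast_add]
    ring

end QNum

section QFacOrd

variable (q : ℝ) (x : ℤ) (n : ℕ)

lemma qFacOrd_succ : qFacOrd q x (n + 1) = qFacOrd q x n * qNum q (x - n) :=
  prod_range_succ _ _

lemma qFacOrd_succ' : qFacOrd q x (n + 1) = qNum q x * qFacOrd q (x - 1) n := by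
  simp only [qFacOrd, prod_range_succ', Nat.cast_add, Nat.cast_one, Nat.cast_zero, sub_zero]
  rw [mul_comm]
  congr 1
  exact prod_congr rfl fun i _ => by rw [sub_sub, add_comm (1 : ℤ)]

end QFacOrd

lemma qFacOrd_eq_pow_mul_add_qNum_mul {q : ℝ} (hq : q ≠ 0) (x : ℤ) (s : ℕ) :
    qFacOrd q x s = q ^ s * qFacOrd q (x - 1) s + qNum q s * qFacOrd q (x - 1) (s - 1) := by
  cases s with
  | zero => simp [qFacOrd]
  | succ n =>
    have top : qNum q x = q ^ (n + 1) * qNum q (x - 1 - n) + qNum q ((n + 1 : ℕ) : ℤ) := by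
      have := qNum_add hq ((n + 1 : ℕ) : ℤ) (x - 1 - n)
      rw [zpow_natCast] at this
      rw [add_comm, ← this]
      congr 1
      push_cast
      ring
    rw [qFacOrd_succ', qFacOrd_succ, top, Nat.add_sub_cancel]
    ring

theorem qFacOrd_recurrence'_general (q : ℝ) (hq : 0 < q)
    (k x : ℕ) (r : Fin k → ℕ) :
    qFacOrd q (x : ℤ) (∑ i, r i) =
      q ^ (∑ i, r i) * qFacOrd q ((x : ℤ) - 1) (∑ i, r i) +
      ∑ j : Fin k,
        q ^ (∑ i ∈ Finset.univ.filter (fun i => i < j), r i) *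
          qNum q (r j) * qFacOrd q ((x : ℤ) - 1) ((∑ i, r i) - 1) := by
  rw [← sum_mul, sum_pow_mul_qNum]
  exact qFacOrd_eq_pow_mul_add_qNum_mul hq.ne' _ _

/-- Second q-factorial-of-order recursion:
    [x]_{s_k,q} = q^(s_k) [x−1]_{s_k,q} + Σ_j q^(s_{j−1}) [r_j]_q [x−1]_{s_k−1,q},
    s_j = r_1 + ⋯ + r_j, s_0 = 0. -/
theorem qFacOrd_recurrence' (q : ℝ) (hq : 0 < q) (hq1 : q ≠ 1)
    (k x : ℕ) (hk : 1 ≤ k) (hx : 1 ≤ x) (r : Fin k → ℕ) (hr : ∀ j, 1 ≤ r j) :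
    qFacOrd q (x : ℤ) (∑ i, r i) =
      q ^ (∑ i, r i) * qFacOrd q ((x : ℤ) - 1) (∑ i, r i) +
      ∑ j : Fin k,
        q ^ (∑ i ∈ Finset.univ.filter (fun i => i < j), r i) *
          qNum q (r j) * qFacOrd q ((x : ℤ) - 1) ((∑ i, r i) - 1) :=
  qFacOrd_recurrence'_general q hq k x r
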